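/- arXiv:1601.00962 — 3 statements merged into one kernel-verified Lean document; each statement's English description precedes it below -/
import Mathlib

section
/- Let ρ be a two-qubit state with correlation matrix T, and let λ1 ≥ λ2 be the two largest eigenvalues of the real symmetric matrix T * Tᵀ. Then √2·(√λ1 + √λ2) is the greatest element of the set of CHSH values of ρ taken over all quadruples of unit vectors a1, a2, b1, b2 in EuclideanSpace ℝ (Fin 3) satisfying ⟪a1, a2⟫ = 0 and ⟪b1, b2⟫ = 0 (mutually unbiased measurements for both parties): every such CHSH value is at most √2·(√λ1 + √λ2), and some such quadruple attains this value. -/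
/-!
With `M = Tᵀ` acting on `ℝ³`, the CHSH value is `⟪M (a₁ + a₂), b₁⟫ + ⟪M (a₁ - a₂), b₂⟫`.
For orthogonal unit vectors `a₁, a₂` the vectors `c₁,₂ = (a₁ ± a₂) / √2` are again
orthonormal, so the CHSH value is `√2 (⟪M c₁, b₁⟫ + ⟪M c₂, b₂⟫)` for two orthonormal pairs
`(c₁, c₂)` and `(b₁, b₂)`. An orthonormal eigenbasis `e` of `T Tᵀ = Mᴴ M`, with eigenvalues
`λ₁ ≥ λ₂ ≥ λ₃`, gives a singular value decomposition `M eᵢ = √λᵢ • gᵢ` with `g` orthonormal.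
Expanding in `e` and `g` and using AM-GM termwise bounds `⟪M c₁, b₁⟫ + ⟪M c₂, b₂⟫` by
`∑ √λᵢ wᵢ` with weights `0 ≤ wᵢ ≤ 1` (Bessel) of total at most `2` (Parseval), hence by
`√λ₁ + √λ₂`; equality holds at `c = (e₁, e₂)`, `b = (g₁, g₂)`.
-/

open Matrix Polynomial
open scoped Kronecker Matrix ComplexOrder

noncomputable section

/-- Pauli matrix σ1. -/
def σ₁ : Matrix (Fin 2) (Fin 2) ℂ := !![0, 1; 1, 0]
/-- Pauli matrix σ2. -/
def σ₂ : Matrix (Fin 2) (Fin 2) ℂ := !![0, -Complex.I; Complex.I, 0]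
/-- Pauli matrix σ3. -/
def σ₃ : Matrix (Fin 2) (Fin 2) ℂ := !![1, 0; 0, -1]

/-- The three Pauli matrices. -/
def pauli : Fin 3 → Matrix (Fin 2) (Fin 2) ℂ := ![σ₁, σ₂, σ₃]

/-- `v·σ` for a real 3-vector `v`. -/
def pauliVec (v : EuclideanSpace ℝ (Fin 3)) : Matrix (Fin 2) (Fin 2) ℂ :=
  (v 0 : ℂ) • σ₁ + (v 1 : ℂ) • σ₂ + (v 2 : ℂ) • σ₃

/-- Full correlation `E = Re tr(ρ ((a·σ) ⊗ₖ (b·σ)))`. -/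
def corrE (ρ : Matrix (Fin 2 × Fin 2) (Fin 2 × Fin 2) ℂ)
    (a b : EuclideanSpace ℝ (Fin 3)) : ℝ :=
  ((ρ * (pauliVec a ⊗ₖ pauliVec b)).trace).re

/-- Correlation matrix `T i j = Re tr(ρ (σᵢ ⊗ₖ σⱼ))` of a two-qubit state. -/
def corrMatrix (ρ : Matrix (Fin 2 × Fin 2) (Fin 2 × Fin 2) ℂ) : Matrix (Fin 3) (Fin 3) ℝ :=
  fun i j => ((ρ * (pauli i ⊗ₖ pauli j)).trace).re

/-- The CHSH value `E(1,1) + E(2,1) + E(1,2) − E(2,2)` of `ρ` at `(a1,a2,b1,b2)`. -/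
def CHSHval (ρ : Matrix (Fin 2 × Fin 2) (Fin 2 × Fin 2) ℂ)
    (a1 a2 b1 b2 : EuclideanSpace ℝ (Fin 3)) : ℝ :=
  corrE ρ a1 b1 + corrE ρ a2 b1 + corrE ρ a1 b2 - corrE ρ a2 b2

/-- The real inner product on `EuclideanSpace ℝ (Fin 3)`. -/
def rip (x y : EuclideanSpace ℝ (Fin 3)) : ℝ := inner ℝ x y

/-- Action of a real 3×3 matrix on a Euclidean 3-vector. -/
def matVec (T : Matrix (Fin 3) (Fin 3) ℝ) (v : EuclideanSpace ℝ (Fin 3)) :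
    EuclideanSpace ℝ (Fin 3) :=
  (EuclideanSpace.equiv (Fin 3) ℝ).symm (T.mulVec (EuclideanSpace.equiv (Fin 3) ℝ v))

/-- `b1', b2'` is the dual basis of the pair `b1, b2` inside `span{b1, b2}`:
`⟪b'_m, b_n⟫ = δ_{mn}`. -/
def IsDualPair (b1 b2 b1' b2' : EuclideanSpace ℝ (Fin 3)) : Prop :=
  b1' ∈ Submodule.span ℝ ({b1, b2} : Set (EuclideanSpace ℝ (Fin 3))) ∧
  b2' ∈ Submodule.span ℝ ({b1, b2} : Set (EuclideanSpace ℝ (Fin 3))) ∧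
  rip b1' b1 = 1 ∧ rip b1' b2 = 0 ∧ rip b2' b1 = 0 ∧ rip b2' b2 = 1

/-- The analog CHSH value of `ρ` at `(a1,a2,b1,b2)`, with `b1', b2'` the dual basis of
`b1, b2`. -/
def ACHSHval (ρ : Matrix (Fin 2 × Fin 2) (Fin 2 × Fin 2) ℂ)
    (a1 a2 b1 b2 b1' b2' : EuclideanSpace ℝ (Fin 3)) : ℝ :=
  ‖(corrE ρ a1 b1 + corrE ρ a2 b1) • b1' + (corrE ρ a1 b2 + corrE ρ a2 b2) • b2'‖ +
  ‖(corrE ρ a1 b1 - corrE ρ a2 b1) • b1' + (corrE ρ a1 b2 - corrE ρ a2 b2) • b2'‖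

/-- A family `P a m` (outcome `a`, setting `m`) of 2×2 matrices admits a finite
local-hidden-state model. -/
def HasLHSModel (P : Fin 2 → Fin 2 → Matrix (Fin 2) (Fin 2) ℂ) : Prop :=
  ∃ (N : ℕ) (τ : Fin N → Matrix (Fin 2) (Fin 2) ℂ) (q : Fin 2 → Fin 2 → Fin N → ℝ),
    (∀ lam, (τ lam).PosSemidef) ∧
    (∀ a m lam, 0 ≤ q a m lam ∧ q a m lam ≤ 1) ∧
    (∀ m lam, q 0 m lam + q 1 m lam = 1) ∧
    (∀ a m, P a m = ∑ lam, q a m lam • τ lam)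

/-- Full correlations `E m n` admit a finite LHV-LHS model with respect to Bob's
measurement vectors `b 0, b 1`. -/
def HasLHVLHSModel (E : Fin 2 → Fin 2 → ℝ) (b : Fin 2 → EuclideanSpace ℝ (Fin 3)) : Prop :=
  ∃ (N : ℕ) (p : Fin N → ℝ) (e : Fin 2 → Fin N → ℝ)
    (ρs : Fin N → Matrix (Fin 2) (Fin 2) ℂ),
    (∀ lam, 0 ≤ p lam) ∧ (∑ lam, p lam = 1) ∧
    (∀ m lam, e m lam ∈ Set.Icc (-1 : ℝ) 1) ∧
    (∀ lam, (ρs lam).PosSemidef ∧ (ρs lam).trace = 1) ∧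
    (∀ m n, E m n = ∑ lam, p lam * e m lam * ((ρs lam * pauliVec (b n)).trace).re)

/-- Full correlations `E m n` admit a finite LHV model. -/
def HasLHVModel (E : Fin 2 → Fin 2 → ℝ) : Prop :=
  ∃ (N : ℕ) (p : Fin N → ℝ) (e f : Fin 2 → Fin N → ℝ),
    (∀ lam, 0 ≤ p lam) ∧ (∑ lam, p lam = 1) ∧
    (∀ m lam, e m lam ∈ Set.Icc (-1 : ℝ) 1) ∧
    (∀ n lam, f n lam ∈ Set.Icc (-1 : ℝ) 1) ∧
    (∀ m n, E m n = ∑ lam, p lam * e m lam * f n lam)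

/-- The effect `(1/2)(I + (−1)^i v·σ)` of the projective measurement along `v`. -/
def effect (v : EuclideanSpace ℝ (Fin 3)) (i : Fin 2) : Matrix (Fin 2) (Fin 2) ℂ :=
  (1/2 : ℝ) • ((1 : Matrix (Fin 2) (Fin 2) ℂ) + ((-1 : ℝ) ^ (i : ℕ)) • pauliVec v)

open Module InnerProductSpace
open scoped RealInnerProductSpace

theorem sum_mul_le_add_of_antitone {n : ℕ} {σ w : Fin (n + 2) → ℝ} (hσ : Antitone σ)
    (hσ0 : ∀ i, 0 ≤ σ i) (hw0 : ∀ i, 0 ≤ w i) (hw1 : ∀ i, w i ≤ 1) (hsum : ∑ i, w i ≤ 2) :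
    ∑ i, σ i * w i ≤ σ 0 + σ 1 := by
  rw [Fin.sum_univ_succ, Fin.sum_univ_succ] at hsum ⊢
  have htail : ∑ i : Fin n, σ i.succ.succ * w i.succ.succ ≤ σ 1 * ∑ i : Fin n, w i.succ.succ := by
    rw [Finset.mul_sum]
    exact Finset.sum_le_sum fun i _ =>
      mul_le_mul_of_nonneg_right (hσ (Fin.le_def.2 (by simp))) (hw0 _)
  have h01 : σ 1 ≤ σ 0 := hσ (Fin.zero_le _)
  simp only [Fin.succ_zero_eq_one] at hsum htail ⊢
  nlinarith [mul_nonneg (sub_nonneg.2 h01) (sub_nonneg.2 (hw1 0)), hσ0 1]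

section RealInnerProductSpace

variable {E : Type*} [NormedAddCommGroup E] [InnerProductSpace ℝ E]

theorem orthonormal_pair_iff {x y : E} :
    Orthonormal ℝ ![x, y] ↔ ‖x‖ = 1 ∧ ‖y‖ = 1 ∧ ⟪x, y⟫ = 0 := by
  simp [Orthonormal, Fin.forall_fin_two, Pairwise, real_inner_comm x y, and_assoc]

theorem Orthonormal.inner_sq_add_inner_sq_le {x y : E} (h : Orthonormal ℝ ![x, y]) (v : E) :
    ⟪v, x⟫ ^ 2 + ⟪v, y⟫ ^ 2 ≤ ‖v‖ ^ 2 := by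
  simpa [Fin.sum_univ_two, real_inner_comm v] using
    h.sum_inner_products_le (s := Finset.univ) (x := v)

theorem Orthonormal.inv_sqrt_two_smul_add_sub {x y : E} (h : Orthonormal ℝ ![x, y]) :
    Orthonormal ℝ ![(√2)⁻¹ • (x + y), (√2)⁻¹ • (x - y)] := by
  obtain ⟨hx, hy, hxy⟩ := orthonormal_pair_iff.1 h
  have hadd : ‖x + y‖ = √2 := by
    rw [← Real.sqrt_sq (norm_nonneg _), norm_add_sq_real, hx, hy, hxy]
    norm_num
  have hsub : ‖x - y‖ = √2 := by
    rw [← Real.sqrt_sq (norm_nonneg _), norm_sub_sq_real, hx, hy, hxy]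
    norm_num
  have hinv : ‖(√2)⁻¹‖ * √2 = 1 := by
    rw [norm_inv, Real.norm_of_nonneg (Real.sqrt_nonneg 2), inv_mul_cancel₀ (by positivity)]
  refine orthonormal_pair_iff.2 ⟨?_, ?_, ?_⟩
  · rw [norm_smul, hadd, hinv]
  · rw [norm_smul, hsub, hinv]
  · rw [inner_smul_left, inner_smul_right,
      (real_inner_add_sub_eq_zero_iff x y).2 (hx.trans hy.symm), mul_zero, mul_zero]

theorem inv_sqrt_two_smul_add_add_sub (x y : E) :
    (√2)⁻¹ • (x + y) + (√2)⁻¹ • (x - y) = √2 • x := by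
  rw [← smul_add, add_add_sub_cancel, ← two_smul ℝ, smul_smul, inv_mul_eq_div, Real.div_sqrt]

theorem inv_sqrt_two_smul_add_sub_sub (x y : E) :
    (√2)⁻¹ • (x + y) - (√2)⁻¹ • (x - y) = √2 • y := by
  rw [← smul_sub, add_sub_sub_cancel, ← two_smul ℝ, smul_smul, inv_mul_eq_div, Real.div_sqrt]

theorem inner_eq_sum_of_apply_eq_smul {ι : Type*} [Fintype ι] {M : E →ₗ[ℝ] E}
    {e g : OrthonormalBasis ι ℝ E} {σ : ι → ℝ} (hM : ∀ i, M (e i) = σ i • g i) (c b : E) :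
    ⟪M c, b⟫ = ∑ i, σ i * (⟪e i, c⟫ * ⟪g i, b⟫) := by
  conv_lhs => rw [← e.sum_repr' c]
  simp only [map_sum, map_smul, hM, sum_inner, inner_smul_left, conj_trivial]
  exact Finset.sum_congr rfl fun i _ => by ring

theorem inner_add_inner_le_of_apply_eq_smul {n : ℕ} {M : E →ₗ[ℝ] E}
    {e g : OrthonormalBasis (Fin (n + 2)) ℝ E} {σ : Fin (n + 2) → ℝ} (hσ : Antitone σ)
    (hσ0 : ∀ i, 0 ≤ σ i) (hM : ∀ i, M (e i) = σ i • g i) {c₁ c₂ b₁ b₂ : E}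
    (hc : Orthonormal ℝ ![c₁, c₂]) (hb : Orthonormal ℝ ![b₁, b₂]) :
    ⟪M c₁, b₁⟫ + ⟪M c₂, b₂⟫ ≤ σ 0 + σ 1 := by
  set w : Fin (n + 2) → ℝ := fun i =>
    (⟪e i, c₁⟫ ^ 2 + ⟪e i, c₂⟫ ^ 2 + ⟪g i, b₁⟫ ^ 2 + ⟪g i, b₂⟫ ^ 2) / 2
  have hw1 : ∀ i, w i ≤ 1 := fun i => by
    have hce := hc.inner_sq_add_inner_sq_le (e i)
    have hbg := hb.inner_sq_add_inner_sq_le (g i)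
    simp only [e.orthonormal.1 i, g.orthonormal.1 i, one_pow] at hce hbg
    simp only [w]
    linarith
  have hsum : ∑ i, w i ≤ 2 := by
    obtain ⟨hc₁, hc₂, -⟩ := orthonormal_pair_iff.1 hc
    obtain ⟨hb₁, hb₂, -⟩ := orthonormal_pair_iff.1 hb
    have he := e.sum_sq_norm_inner_right
    have hg := g.sum_sq_norm_inner_right
    simp only [Real.norm_eq_abs, sq_abs] at he hg
    simp only [w, ← Finset.sum_div, Finset.sum_add_distrib, he, hg, hc₁, hc₂, hb₁, hb₂]
    norm_num
  calc ⟪M c₁, b₁⟫ + ⟪M c₂, b₂⟫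
      = ∑ i, σ i * (⟪e i, c₁⟫ * ⟪g i, b₁⟫ + ⟪e i, c₂⟫ * ⟪g i, b₂⟫) := by
        simp only [inner_eq_sum_of_apply_eq_smul hM, ← Finset.sum_add_distrib, mul_add]
    _ ≤ ∑ i, σ i * w i := Finset.sum_le_sum fun i _ => mul_le_mul_of_nonneg_left (by
        simp only [w]
        nlinarith [sq_nonneg (⟪e i, c₁⟫ - ⟪g i, b₁⟫), sq_nonneg (⟪e i, c₂⟫ - ⟪g i, b₂⟫)]) (hσ0 i)
    _ ≤ σ 0 + σ 1 := sum_mul_le_add_of_antitone hσ hσ0 (fun i => by positivity) hw1 hsum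

variable [FiniteDimensional ℝ E]

theorem exists_orthonormalBasis_eq_norm_smul {n : ℕ} (hn : finrank ℝ E = n) {f : Fin n → E}
    (hf : Pairwise fun i j => ⟪f i, f j⟫ = 0) :
    ∃ g : OrthonormalBasis (Fin n) ℝ E, ∀ i, f i = ‖f i‖ • g i := by
  refine ⟨gramSchmidtOrthonormalBasis (hn.trans (Fintype.card_fin n).symm) f, fun i => ?_⟩
  rcases eq_or_ne (f i) 0 with hi | hi
  · simp [hi]
  · rw [gramSchmidtOrthonormalBasis_apply_of_orthogonal _ hf hi, smul_smul]
    simp [hi]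

namespace LinearMap.IsSymmetric

theorem exists_orthonormalBasis_apply_eigenvectorBasis {M A : E →ₗ[ℝ] E} (hA : A.IsSymmetric)
    (hMA : ∀ x y, ⟪M x, M y⟫ = ⟪x, A y⟫) {n : ℕ} (hn : finrank ℝ E = n) :
    ∃ g : OrthonormalBasis (Fin n) ℝ E,
      ∀ i, M (hA.eigenvectorBasis hn i) = √(hA.eigenvalues hn i) • g i := by
  set e := hA.eigenvectorBasis hn
  have hinner : ∀ i j, ⟪M (e i), M (e j)⟫ = hA.eigenvalues hn j * ⟪e i, e j⟫ := fun i j => by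
    rw [hMA, hA.apply_eigenvectorBasis, inner_smul_right]
    rfl
  obtain ⟨g, hg⟩ := exists_orthonormalBasis_eq_norm_smul hn (f := fun i => M (e i))
    fun i j hij => by simp only [hinner, e.orthonormal.2 hij, mul_zero]
  refine ⟨g, fun i => ?_⟩
  rw [hg i, norm_eq_sqrt_real_inner, hinner, real_inner_self_eq_norm_sq, e.orthonormal.1 i]
  simp

theorem eigenvalues_eq_of_charpoly_eq {A : E →ₗ[ℝ] E} (hA : A.IsSymmetric)
    (hn : finrank ℝ E = 3) {l1 l2 l3 : ℝ} (h12 : l2 ≤ l1) (h23 : l3 ≤ l2)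
    (h : A.charpoly = (X - C l1) * (X - C l2) * (X - C l3)) :
    hA.eigenvalues hn = ![l1, l2, l3] := by
  have hs := hA.sort_roots_charpoly_eq_eigenvalues hn
  have hroots : A.charpoly.roots.map RCLike.re = ↑[l1, l2, l3] := by
    have hne : ∀ a : ℝ, X - C a ≠ 0 := X_sub_C_ne_zero
    rw [h, roots_mul (mul_ne_zero (mul_ne_zero (hne _) (hne _)) (hne _)),
      roots_mul (mul_ne_zero (hne _) (hne _))]
    simp only [roots_X_sub_C, Multiset.singleton_add, Multiset.cons_add, Multiset.map_cons,
      RCLike.re_to_real, Multiset.map_singleton]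
    rfl
  rw [hroots, Multiset.coe_sort, List.mergeSort_of_pairwise] at hs
  · exact List.ofFn_injective (by simpa using hs.symm)
  · simp [h12, h23, h12.trans' h23]

theorem isGreatest_chsh {M A : E →ₗ[ℝ] E} (hA : A.IsSymmetric)
    (hMA : ∀ x y, ⟪M x, M y⟫ = ⟪x, A y⟫) {n : ℕ} (hn : finrank ℝ E = n + 2) :
    IsGreatest {s : ℝ | ∃ a₁ a₂ b₁ b₂ : E, ‖a₁‖ = 1 ∧ ‖a₂‖ = 1 ∧ ‖b₁‖ = 1 ∧ ‖b₂‖ = 1 ∧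
        ⟪a₁, a₂⟫ = 0 ∧ ⟪b₁, b₂⟫ = 0 ∧ s = ⟪M (a₁ + a₂), b₁⟫ + ⟪M (a₁ - a₂), b₂⟫}
      (√2 * (√(hA.eigenvalues hn 0) + √(hA.eigenvalues hn 1))) := by
  set e := hA.eigenvectorBasis hn
  obtain ⟨g, hg⟩ := hA.exists_orthonormalBasis_apply_eigenvectorBasis hMA hn
  have hpair : ∀ f : OrthonormalBasis (Fin (n + 2)) ℝ E, Orthonormal ℝ ![f 0, f 1] := fun f =>
    orthonormal_pair_iff.2 ⟨f.orthonormal.1 0, f.orthonormal.1 1, f.orthonormal.2 zero_ne_one⟩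
  constructor
  · obtain ⟨ha₁, ha₂, ha⟩ := orthonormal_pair_iff.1 (hpair e).inv_sqrt_two_smul_add_sub
    obtain ⟨hb₁, hb₂, hb⟩ := orthonormal_pair_iff.1 (hpair g)
    refine ⟨_, _, g 0, g 1, ha₁, ha₂, hb₁, hb₂, ha, hb, ?_⟩
    rw [inv_sqrt_two_smul_add_add_sub, inv_sqrt_two_smul_add_sub_sub, map_smul, map_smul, hg, hg]
    simp only [inner_smul_left, real_inner_self_eq_norm_sq, hb₁, hb₂, conj_trivial]
    ring
  · rintro _ ⟨a₁, a₂, b₁, b₂, ha₁, ha₂, hb₁, hb₂, ha, hb, rfl⟩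
    have hc := (orthonormal_pair_iff.2 ⟨ha₁, ha₂, ha⟩).inv_sqrt_two_smul_add_sub
    calc ⟪M (a₁ + a₂), b₁⟫ + ⟪M (a₁ - a₂), b₂⟫
        = √2 * (⟪M ((√2)⁻¹ • (a₁ + a₂)), b₁⟫ + ⟪M ((√2)⁻¹ • (a₁ - a₂)), b₂⟫) := by
          simp only [map_smul, inner_smul_left, conj_trivial]
          field_simp
      _ ≤ √2 * (√(hA.eigenvalues hn 0) + √(hA.eigenvalues hn 1)) :=
          mul_le_mul_of_nonneg_left (inner_add_inner_le_of_apply_eq_smul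
            (fun i j hij => Real.sqrt_le_sqrt (hA.eigenvalues_antitone hn hij))
            (fun i => Real.sqrt_nonneg _) hg hc (orthonormal_pair_iff.2 ⟨hb₁, hb₂, hb⟩))
            (Real.sqrt_nonneg 2)

end LinearMap.IsSymmetric

end RealInnerProductSpace

theorem charpoly_toEuclideanLin {n : Type*} [Fintype n] [DecidableEq n] (A : Matrix n n ℝ) :
    (toEuclideanLin A).charpoly = A.charpoly := by
  rw [toEuclideanLin_eq_toLin_orthonormal, charpoly_toLin]

theorem inner_toEuclideanLin_toEuclideanLin {m n : Type*} [Fintype m] [Fintype n]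
    [DecidableEq m] [DecidableEq n] (B : Matrix m n ℝ) (x y : EuclideanSpace ℝ n) :
    ⟪toEuclideanLin B x, toEuclideanLin B y⟫ = ⟪x, toEuclideanLin (Bᵀ * B) y⟫ := by
  rw [← LinearMap.adjoint_inner_right, ← toEuclideanLin_conjTranspose_eq_adjoint,
    conjTranspose_eq_transpose_of_trivial, toLpLin_mul_same, LinearMap.comp_apply]

theorem corrE_eq_sum (ρ : Matrix (Fin 2 × Fin 2) (Fin 2 × Fin 2) ℂ)
    (a b : EuclideanSpace ℝ (Fin 3)) :
    corrE ρ a b = ∑ i, ∑ j, a i * b j * corrMatrix ρ i j := by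
  have hk : pauliVec a ⊗ₖ pauliVec b
      = ∑ i : Fin 3, ∑ j : Fin 3, ((a i : ℂ) * (b j : ℂ)) • (pauli i ⊗ₖ pauli j) := by
    simp only [pauliVec, add_kronecker, kronecker_add, smul_kronecker, kronecker_smul,
      Fin.sum_univ_three, pauli, Matrix.cons_val_zero, Matrix.cons_val_one,
      Matrix.cons_val_two, Matrix.head_cons, Matrix.tail_cons]
    module
  simp only [corrE, hk, Matrix.mul_sum, Matrix.trace_sum, Complex.re_sum, Matrix.mul_smul,
    Matrix.trace_smul, smul_eq_mul, ← Complex.ofReal_mul, Complex.re_ofReal_mul, corrMatrix]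

theorem corrE_eq_inner (ρ : Matrix (Fin 2 × Fin 2) (Fin 2 × Fin 2) ℂ)
    (a b : EuclideanSpace ℝ (Fin 3)) :
    corrE ρ a b = ⟪toEuclideanLin (corrMatrix ρ)ᵀ a, b⟫ := by
  simp only [corrE_eq_sum, PiLp.inner_apply, toLpLin_apply, mulVec, dotProduct,
    transpose_apply, RCLike.inner_apply, conj_trivial, Finset.mul_sum]
  rw [Finset.sum_comm]
  exact Finset.sum_congr rfl fun i _ => Finset.sum_congr rfl fun j _ => by ring

theorem CHSHval_eq_inner (ρ : Matrix (Fin 2 × Fin 2) (Fin 2 × Fin 2) ℂ)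
    (a₁ a₂ b₁ b₂ : EuclideanSpace ℝ (Fin 3)) :
    CHSHval ρ a₁ a₂ b₁ b₂ = ⟪toEuclideanLin (corrMatrix ρ)ᵀ (a₁ + a₂), b₁⟫ +
      ⟪toEuclideanLin (corrMatrix ρ)ᵀ (a₁ - a₂), b₂⟫ := by
  simp only [CHSHval, corrE_eq_inner, map_add, map_sub, inner_add_left, inner_sub_left]
  ring

theorem chsh_mub_isGreatest_general (ρ : Matrix (Fin 2 × Fin 2) (Fin 2 × Fin 2) ℂ)
    (l1 l2 l3 : ℝ) (h12 : l2 ≤ l1) (h23 : l3 ≤ l2)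
    (hchar : (corrMatrix ρ * (corrMatrix ρ)ᵀ).charpoly
      = (X - C l1) * (X - C l2) * (X - C l3)) :
    IsGreatest {s : ℝ | ∃ a1 a2 b1 b2 : EuclideanSpace ℝ (Fin 3),
        ‖a1‖ = 1 ∧ ‖a2‖ = 1 ∧ ‖b1‖ = 1 ∧ ‖b2‖ = 1 ∧
        rip a1 a2 = 0 ∧ rip b1 b2 = 0 ∧ s = CHSHval ρ a1 a2 b1 b2}
      (Real.sqrt 2 * (Real.sqrt l1 + Real.sqrt l2)) := by
  let T := corrMatrix ρ
  have hS : (toEuclideanLin (T * Tᵀ)).IsSymmetric := isSymmetric_toEuclideanLin_iff.mpr <| by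
    simpa [conjTranspose_eq_transpose_of_trivial] using isHermitian_mul_conjTranspose_self T
  have hMA : ∀ x y, ⟪toEuclideanLin Tᵀ x, toEuclideanLin Tᵀ y⟫ =
      ⟪x, toEuclideanLin (T * Tᵀ) y⟫ := by
    simpa using inner_toEuclideanLin_toEuclideanLin Tᵀ
  have hn : finrank ℝ (EuclideanSpace ℝ (Fin 3)) = 3 := finrank_euclideanSpace_fin
  have heig := hS.eigenvalues_eq_of_charpoly_eq hn h12 h23
    ((charpoly_toEuclideanLin _).trans hchar)
  have key := hS.isGreatest_chsh hMA hn
  -- `key` indexes the eigenvalues by `Fin (1 + 2)`, which `simp` does not match with `Fin 3`.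
  rw [heig] at key
  simpa [CHSHval_eq_inner, rip] using key

/-- `√2(√λ1 + √λ2)` is the greatest CHSH value of a two-qubit state `ρ` over
quadruples of unit vectors with `a1 ⟂ a2` and `b1 ⟂ b2` (mutually unbiased measurements). -/
theorem chsh_mub_isGreatest (ρ : Matrix (Fin 2 × Fin 2) (Fin 2 × Fin 2) ℂ)
    (hρ : ρ.PosSemidef) (htr : ρ.trace = 1)
    (l1 l2 l3 : ℝ) (h12 : l2 ≤ l1) (h23 : l3 ≤ l2)
    (hchar : (corrMatrix ρ * (corrMatrix ρ)ᵀ).charpoly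
      = (X - C l1) * (X - C l2) * (X - C l3)) :
    IsGreatest {s : ℝ | ∃ a1 a2 b1 b2 : EuclideanSpace ℝ (Fin 3),
        ‖a1‖ = 1 ∧ ‖a2‖ = 1 ∧ ‖b1‖ = 1 ∧ ‖b2‖ = 1 ∧
        rip a1 a2 = 0 ∧ rip b1 b2 = 0 ∧ s = CHSHval ρ a1 a2 b1 b2}
      (Real.sqrt 2 * (Real.sqrt l1 + Real.sqrt l2)) :=
  chsh_mub_isGreatest_general ρ l1 l2 l3 h12 h23 hchar

end
end

section
/- Let ρ be a two-qubit state, let a1, a2 be unit vectors and b1, b2 linearly independent unit vectors in EuclideanSpace ℝ (Fin 3) with dual basis b1', b2', and set E(m,n) := Re(trace(ρ * ((a_m·σ) ⊗ₖ (b_n·σ)))). Then the full correlations E admit a finite LHV-LHS model with respect to b1, b2 if and only if ‖(E(1,1)+E(2,1))·b1' + (E(1,2)+E(2,2))·b2'‖ + ‖(E(1,1)−E(2,1))·b1' + (E(1,2)−E(2,2))·b2'‖ ≤ 2 (the analog CHSH inequality). -/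
open Matrix Polynomial
open scoped Kronecker Matrix ComplexOrder

noncomputable section

/-!
Replacing every hidden qubit state by its Bloch vector `r`, a point of the unit ball with
`Re tr(ρ (b·σ)) = ⟪r, b⟫`, turns an LHV-LHS model into two vectors `u m = ∑ p e_m r` with
`E m n = ⟪u m, b n⟫`. Since `|e₀ + e₁| + |e₀ - e₁| ≤ 2` on `[-1, 1]²`, these satisfy
`‖u₀ + u₁‖ + ‖u₀ - u₁‖ ≤ 2`, and conversely every such pair comes from a model with three hidden
states. Finally `∑ₙ (E 0 n ± E 1 n) b'ₙ` is the orthogonal projection of `u₀ ± u₁` onto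
`span {b₁, b₂}`: it has smaller norm, and it is itself an admissible choice of `u₀ ± u₁`.
-/

open scoped InnerProductSpace

theorem Matrix.IsHermitian.posSemidef_of_det_nonneg_of_trace_nonneg {𝕜 : Type*} [RCLike 𝕜]
    {A : Matrix (Fin 2) (Fin 2) 𝕜} (hA : A.IsHermitian) (hdet : 0 ≤ A.det) (htr : 0 ≤ A.trace) :
    A.PosSemidef := by
  rw [hA.det_eq_prod_eigenvalues, Fin.prod_univ_two, ← RCLike.ofReal_mul,
    RCLike.ofReal_nonneg] at hdet
  rw [hA.trace_eq_sum_eigenvalues, Fin.sum_univ_two, ← RCLike.ofReal_add,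
    RCLike.ofReal_nonneg] at htr
  rw [hA.posSemidef_iff_eigenvalues_nonneg, Pi.le_def, Fin.forall_fin_two]
  constructor <;> simp only [Pi.zero_apply] <;> nlinarith

def bloch (M : Matrix (Fin 2) (Fin 2) ℂ) : EuclideanSpace ℝ (Fin 3) :=
  WithLp.toLp 2 fun i => ((M * pauli i).trace).re

def blochState (v : EuclideanSpace ℝ (Fin 3)) : Matrix (Fin 2) (Fin 2) ℂ :=
  (1 / 2 : ℂ) • (1 + pauliVec v)

theorem re_trace_mul_pauliVec (M : Matrix (Fin 2) (Fin 2) ℂ) (v : EuclideanSpace ℝ (Fin 3)) :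
    ((M * pauliVec v).trace).re = ⟪bloch M, v⟫_ℝ := by
  simp [pauliVec, bloch, pauli, Matrix.mul_add, PiLp.inner_apply, Fin.sum_univ_three, mul_comm]

theorem blochState_eq (v : EuclideanSpace ℝ (Fin 3)) :
    blochState v = (1 / 2 : ℂ) •
      !![1 + (v 2 : ℂ), v 0 - v 1 * Complex.I; v 0 + v 1 * Complex.I, 1 - v 2] := by
  ext i j
  fin_cases i <;> fin_cases j <;> simp [blochState, pauliVec, σ₁, σ₂, σ₃, sub_eq_add_neg]

theorem isHermitian_blochState (v : EuclideanSpace ℝ (Fin 3)) : (blochState v).IsHermitian := by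
  rw [blochState_eq]
  refine Matrix.IsHermitian.ext fun i j => ?_
  fin_cases i <;> fin_cases j <;> simp [Complex.ext_iff]

theorem trace_blochState (v : EuclideanSpace ℝ (Fin 3)) : (blochState v).trace = 1 := by
  rw [blochState_eq, trace_smul, trace_fin_two_of]
  ring

theorem det_blochState (v : EuclideanSpace ℝ (Fin 3)) :
    (blochState v).det = ((1 - ‖v‖ ^ 2) / 4 : ℝ) := by
  rw [blochState_eq, det_smul, det_fin_two_of, Fintype.card_fin, EuclideanSpace.real_norm_sq_eq,
    Fin.sum_univ_three]
  push_cast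
  ring_nf
  rw [Complex.I_sq]
  ring

theorem bloch_blochState (v : EuclideanSpace ℝ (Fin 3)) : bloch (blochState v) = v := by
  ext i
  fin_cases i <;> simp [bloch, blochState_eq, pauli, σ₁, σ₂, σ₃, trace_fin_two] <;> ring

theorem blochState_bloch {M : Matrix (Fin 2) (Fin 2) ℂ} (hM : M.IsHermitian) (htr : M.trace = 1) :
    blochState (bloch M) = M := by
  have h10 : M 1 0 = star (M 0 1) := (hM.apply 1 0).symm
  have h00 : (M 0 0).im = 0 := Complex.conj_eq_iff_im.mp (hM.apply 0 0)
  have h11 : (M 1 1).im = 0 := Complex.conj_eq_iff_im.mp (hM.apply 1 1)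
  have htr' : (M 0 0).re + (M 1 1).re = 1 := by
    simpa [trace_fin_two] using congrArg Complex.re htr
  rw [blochState_eq]
  ext i j
  fin_cases i <;> fin_cases j <;>
    simp [bloch, pauli, σ₁, σ₂, σ₃, trace_fin_two, Matrix.mul_apply, Complex.ext_iff, h10, h00, h11,
      ← two_mul] <;> linarith

theorem norm_bloch_le_one {M : Matrix (Fin 2) (Fin 2) ℂ} (hM : M.PosSemidef) (htr : M.trace = 1) :
    ‖bloch M‖ ≤ 1 := by
  have hdet := hM.det_nonneg
  rw [← blochState_bloch hM.isHermitian htr, det_blochState, Complex.zero_le_real] at hdet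
  exact (sq_le_one_iff₀ (norm_nonneg _)).mp (by linarith)

theorem posSemidef_blochState {v : EuclideanSpace ℝ (Fin 3)} (hv : ‖v‖ ≤ 1) :
    (blochState v).PosSemidef :=
  (isHermitian_blochState v).posSemidef_of_det_nonneg_of_trace_nonneg
    (by rw [det_blochState, Complex.zero_le_real]; nlinarith [norm_nonneg v])
    (by rw [trace_blochState]; exact zero_le_one)

section BlochModel

variable {F ι : Type*} [NormedAddCommGroup F] [InnerProductSpace ℝ F]

def HasBlochModel (E : Fin 2 → ι → ℝ) (b : ι → F) : Prop :=
  ∃ (N : ℕ) (p : Fin N → ℝ) (e : Fin 2 → Fin N → ℝ) (r : Fin N → F),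
    (∀ lam, 0 ≤ p lam) ∧ (∑ lam, p lam = 1) ∧ (∀ m lam, e m lam ∈ Set.Icc (-1 : ℝ) 1) ∧
    (∀ lam, ‖r lam‖ ≤ 1) ∧ (∀ m n, E m n = ∑ lam, p lam * e m lam * ⟪r lam, b n⟫_ℝ)

def HasVectorModel (E : Fin 2 → ι → ℝ) (b : ι → F) : Prop :=
  ∃ u : Fin 2 → F, ‖u 0 + u 1‖ + ‖u 0 - u 1‖ ≤ 2 ∧ ∀ m n, E m n = ⟪u m, b n⟫_ℝ

theorem abs_add_add_abs_sub_le_two {x y : ℝ} (hx : x ∈ Set.Icc (-1 : ℝ) 1)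
    (hy : y ∈ Set.Icc (-1 : ℝ) 1) : |x + y| + |x - y| ≤ 2 := by
  obtain ⟨hx₀, hx₁⟩ := hx
  obtain ⟨hy₀, hy₁⟩ := hy
  rcases abs_cases (x + y) with ⟨h, -⟩ | ⟨h, -⟩ <;>
    rcases abs_cases (x - y) with ⟨h', -⟩ | ⟨h', -⟩ <;> linarith

theorem norm_sum_smul_le_sum_abs {κ : Type*} [Fintype κ] (c : κ → ℝ) {r : κ → F}
    (hr : ∀ i, ‖r i‖ ≤ 1) : ‖∑ i, c i • r i‖ ≤ ∑ i, |c i| :=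
  (norm_sum_le _ _).trans <| Finset.sum_le_sum fun i _ => by
    rw [norm_smul, Real.norm_eq_abs]
    exact mul_le_of_le_one_right (abs_nonneg _) (hr i)

theorem norm_smul_inv_norm_smul (x : F) : ‖x‖ • ‖x‖⁻¹ • x = x := by
  rcases eq_or_ne x 0 with rfl | hx
  · simp
  · exact smul_inv_smul₀ (norm_ne_zero_iff.mpr hx) x

theorem HasBlochModel.hasVectorModel {E : Fin 2 → ι → ℝ} {b : ι → F} (h : HasBlochModel E b) :
    HasVectorModel E b := by
  obtain ⟨N, p, e, r, hp, hp₁, he, hr, hE⟩ := h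
  set u : Fin 2 → F := fun m => ∑ lam, (p lam * e m lam) • r lam
  refine ⟨u, ?_, fun m n => by simp [hE, u, sum_inner, real_inner_smul_left]⟩
  have hadd : u 0 + u 1 = ∑ lam, (p lam * (e 0 lam + e 1 lam)) • r lam := by
    simp only [u, ← Finset.sum_add_distrib, ← add_smul, mul_add]
  have hsub : u 0 - u 1 = ∑ lam, (p lam * (e 0 lam - e 1 lam)) • r lam := by
    simp only [u, ← Finset.sum_sub_distrib, ← sub_smul, mul_sub]
  calc ‖u 0 + u 1‖ + ‖u 0 - u 1‖
      ≤ ∑ lam, |p lam * (e 0 lam + e 1 lam)| + ∑ lam, |p lam * (e 0 lam - e 1 lam)| :=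
        add_le_add (hadd ▸ norm_sum_smul_le_sum_abs _ hr) (hsub ▸ norm_sum_smul_le_sum_abs _ hr)
    _ = ∑ lam, p lam * (|e 0 lam + e 1 lam| + |e 0 lam - e 1 lam|) := by
        rw [← Finset.sum_add_distrib]
        refine Finset.sum_congr rfl fun lam _ => ?_
        rw [abs_mul, abs_mul, abs_of_nonneg (hp lam), mul_add]
    _ ≤ ∑ lam, p lam * 2 := Finset.sum_le_sum fun lam _ =>
        mul_le_mul_of_nonneg_left (abs_add_add_abs_sub_le_two (he 0 lam) (he 1 lam)) (hp lam)
    _ = 2 := by rw [← Finset.sum_mul, hp₁, one_mul]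

/-- Split `u m` along the unit vectors of `u 0 + u 1` and `u 0 - u 1`, with weights half their
norms; the zero vector takes the remaining weight. -/
theorem HasVectorModel.hasBlochModel {E : Fin 2 → ι → ℝ} {b : ι → F} (h : HasVectorModel E b) :
    HasBlochModel E b := by
  obtain ⟨u, hu, hE⟩ := h
  set s := u 0 + u 1
  set d := u 0 - u 1
  have hweight : ∀ x : F, (‖x‖ / 2) • ‖x‖⁻¹ • x = (1 / 2 : ℝ) • x := fun x => by
    rw [div_eq_mul_one_div, mul_comm, mul_smul, norm_smul_inv_norm_smul]
  let p : Fin 3 → ℝ := ![‖s‖ / 2, ‖d‖ / 2, 1 - ‖s‖ / 2 - ‖d‖ / 2]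
  let e : Fin 2 → Fin 3 → ℝ := ![![1, 1, 0], ![1, -1, 0]]
  let r : Fin 3 → F := ![‖s‖⁻¹ • s, ‖d‖⁻¹ • d, 0]
  have hu' : ∀ m, ∑ lam, (p lam * e m lam) • r lam = u m := by
    intro m
    fin_cases m <;>
      simp only [p, e, r, Fin.sum_univ_three, Fin.isValue, Fin.zero_eta, Fin.mk_one, cons_val_zero,
        cons_val_one, cons_val, mul_one, mul_neg, neg_smul, mul_zero, smul_zero, add_zero, hweight,
        s, d] <;>
      module
  refine ⟨3, p, e, r, ?_, ?_, ?_, ?_, fun m n => ?_⟩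
  · intro lam
    fin_cases lam <;>
      simp only [p, Fin.isValue, Fin.zero_eta, Fin.mk_one, Fin.reduceFinMk, cons_val_zero,
        cons_val_one, cons_val] <;>
      linarith [norm_nonneg s, norm_nonneg d]
  · simp [p, Fin.sum_univ_three]
  · intro m lam
    fin_cases m <;> fin_cases lam <;> norm_num [e]
  · intro lam
    fin_cases lam <;>
      simp [r, fun x : F => mem_closedBall_zero_iff.mp (inv_norm_smul_mem_unitClosedBall x)]
  · rw [hE, ← hu' m]
    simp [sum_inner, real_inner_smul_left, mul_assoc]

theorem hasBlochModel_iff_hasVectorModel {E : Fin 2 → ι → ℝ} {b : ι → F} :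
    HasBlochModel E b ↔ HasVectorModel E b :=
  ⟨HasBlochModel.hasVectorModel, HasVectorModel.hasBlochModel⟩

end BlochModel

theorem hasLHVLHSModel_iff_hasBlochModel (E : Fin 2 → Fin 2 → ℝ)
    (b : Fin 2 → EuclideanSpace ℝ (Fin 3)) : HasLHVLHSModel E b ↔ HasBlochModel E b := by
  constructor
  · rintro ⟨N, p, e, ρs, hp, hp₁, he, hρs, hE⟩
    exact ⟨N, p, e, fun lam => bloch (ρs lam), hp, hp₁, he,
      fun lam => norm_bloch_le_one (hρs lam).1 (hρs lam).2,
      fun m n => by simp only [hE, re_trace_mul_pauliVec]⟩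
  · rintro ⟨N, p, e, r, hp, hp₁, he, hr, hE⟩
    exact ⟨N, p, e, fun lam => blochState (r lam), hp, hp₁, he,
      fun lam => ⟨posSemidef_blochState (hr lam), trace_blochState _⟩,
      fun m n => by simp only [hE, re_trace_mul_pauliVec, bloch_blochState]⟩

section DualFamily

variable {F ι : Type*} [NormedAddCommGroup F] [InnerProductSpace ℝ F] [Fintype ι] [DecidableEq ι]
  {b b' : ι → F}

theorem inner_sum_smul_dual (hdual : ∀ m n, ⟪b' m, b n⟫_ℝ = if m = n then 1 else 0)
    (x : ι → ℝ) (n : ι) : ⟪∑ m, x m • b' m, b n⟫_ℝ = x n := by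
  simp [sum_inner, real_inner_smul_left, hdual]

theorem norm_sum_inner_smul_dual_le (hspan : ∀ m, b' m ∈ Submodule.span ℝ (Set.range b))
    (hdual : ∀ m n, ⟪b' m, b n⟫_ℝ = if m = n then 1 else 0) (v : F) :
    ‖∑ n, ⟪v, b n⟫_ℝ • b' n‖ ≤ ‖v‖ := by
  set K := Submodule.span ℝ (Set.range b)
  have : FiniteDimensional ℝ K := FiniteDimensional.span_of_finite ℝ (Set.finite_range b)
  have hproj : K.starProjection v = ∑ n, ⟪v, b n⟫_ℝ • b' n := by
    refine Submodule.eq_starProjection_of_mem_of_inner_eq_zero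
      (Submodule.sum_mem _ fun n _ => Submodule.smul_mem _ _ (hspan n)) fun w hw => ?_
    have hK : K ≤ LinearMap.ker (innerₛₗ ℝ (v - ∑ n, ⟪v, b n⟫_ℝ • b' n)) := by
      refine Submodule.span_le.mpr ?_
      rintro _ ⟨n, rfl⟩
      simp only [SetLike.mem_coe, LinearMap.mem_ker, innerₛₗ_apply_apply, inner_sub_left,
        inner_sum_smul_dual hdual, sub_self]
    exact hK hw
  exact hproj ▸ K.norm_starProjection_apply_le v

theorem hasVectorModel_iff_of_dual
    (hspan : ∀ m, b' m ∈ Submodule.span ℝ (Set.range b))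
    (hdual : ∀ m n, ⟪b' m, b n⟫_ℝ = if m = n then 1 else 0) (E : Fin 2 → ι → ℝ) :
    HasVectorModel E b ↔
      ‖∑ n, (E 0 n + E 1 n) • b' n‖ + ‖∑ n, (E 0 n - E 1 n) • b' n‖ ≤ 2 := by
  constructor
  · rintro ⟨u, hu, hE⟩
    have hadd : ∑ n, (E 0 n + E 1 n) • b' n = ∑ n, ⟪u 0 + u 1, b n⟫_ℝ • b' n := by
      simp only [hE, inner_add_left]
    have hsub : ∑ n, (E 0 n - E 1 n) • b' n = ∑ n, ⟪u 0 - u 1, b n⟫_ℝ • b' n := by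
      simp only [hE, inner_sub_left]
    rw [hadd, hsub]
    exact (add_le_add (norm_sum_inner_smul_dual_le hspan hdual _)
      (norm_sum_inner_smul_dual_le hspan hdual _)).trans hu
  · intro h
    refine ⟨fun m => ∑ n, E m n • b' n, ?_, fun m n => (inner_sum_smul_dual hdual _ n).symm⟩
    simpa only [← Finset.sum_add_distrib, ← Finset.sum_sub_distrib, add_smul, sub_smul] using h

end DualFamily

theorem IsDualPair.mem_span {b1 b2 b1' b2' : EuclideanSpace ℝ (Fin 3)}
    (h : IsDualPair b1 b2 b1' b2') :
    ∀ m, ![b1', b2'] m ∈ Submodule.span ℝ (Set.range ![b1, b2]) := by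
  rw [Matrix.range_cons_cons_empty, Fin.forall_fin_two]
  exact ⟨h.1, h.2.1⟩

theorem IsDualPair.inner_eq {b1 b2 b1' b2' : EuclideanSpace ℝ (Fin 3)}
    (h : IsDualPair b1 b2 b1' b2') :
    ∀ m n, ⟪![b1', b2'] m, ![b1, b2] n⟫_ℝ = if m = n then 1 else 0 := by
  obtain ⟨-, -, h11, h12, h21, h22⟩ := h
  simp only [Fin.forall_fin_two]
  exact ⟨⟨h11, h12⟩, h21, h22⟩

theorem lhvlhs_iff_achsh_general (ρ : Matrix (Fin 2 × Fin 2) (Fin 2 × Fin 2) ℂ)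
    (a1 a2 b1 b2 b1' b2' : EuclideanSpace ℝ (Fin 3))
    (hdual : IsDualPair b1 b2 b1' b2') :
    HasLHVLHSModel (fun m n => corrE ρ (![a1, a2] m) (![b1, b2] n)) ![b1, b2] ↔
      ACHSHval ρ a1 a2 b1 b2 b1' b2' ≤ 2 := by
  rw [hasLHVLHSModel_iff_hasBlochModel, hasBlochModel_iff_hasVectorModel,
    hasVectorModel_iff_of_dual hdual.mem_span hdual.inner_eq]
  simp [ACHSHval, Fin.sum_univ_two]

/-- the full correlations of a two-qubit state `ρ` at unit vectors
`a1, a2` and linearly independent unit vectors `b1, b2` (with dual basis `b1', b2'`) admit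
a finite LHV-LHS model with respect to `b1, b2` iff the analog CHSH inequality holds. -/
theorem lhvlhs_iff_achsh (ρ : Matrix (Fin 2 × Fin 2) (Fin 2 × Fin 2) ℂ)
    (hρ : ρ.PosSemidef) (htr : ρ.trace = 1)
    (a1 a2 b1 b2 b1' b2' : EuclideanSpace ℝ (Fin 3))
    (ha1 : ‖a1‖ = 1) (ha2 : ‖a2‖ = 1) (hb1 : ‖b1‖ = 1) (hb2 : ‖b2‖ = 1)
    (hind : LinearIndependent ℝ ![b1, b2]) (hdual : IsDualPair b1 b2 b1' b2') :
    HasLHVLHSModel (fun m n => corrE ρ (![a1, a2] m) (![b1, b2] n)) ![b1, b2] ↔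
      ACHSHval ρ a1 a2 b1 b2 b1' b2' ≤ 2 :=
  lhvlhs_iff_achsh_general ρ a1 a2 b1 b2 b1' b2' hdual
end
end

section
/- Let ρ be a two-qubit state, let a1, a2, b be unit vectors in EuclideanSpace ℝ (Fin 3), let ε1, ε2 ∈ {1, −1}, and set b_n := ε_n·b (so Bob's two measurement vectors are parallel or antiparallel). Define the joint probabilities P(i,j,m,n) := Re(trace(ρ * (((1/2)·(I + (−1)^i·(a_m·σ))) ⊗ₖ ((1/2)·(I + (−1)^j·(b_n·σ)))))) for i, j ∈ {0,1} and m, n ∈ {1,2}. Then the full statistics admits a finite LHV-LHS model: there exist N : ℕ, reals p(λ) ≥ 0 with Σ_λ p(λ) = 1, reals q(i,m,λ) ∈ [0,1] with q(0,m,λ) + q(1,m,λ) = 1, and positive semidefinite trace-one 2×2 complex matrices ρ(λ) such that P(i,j,m,n) = Σ_λ p(λ)·q(i,m,λ)·Re(trace(ρ(λ) * ((1/2)·(I + (−1)^j·(b_n·σ))))) for all i, j, m, n. -/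
open Matrix Polynomial
open scoped Kronecker Matrix ComplexOrder

noncomputable section

/-!
Since `effect (-b) j = effect b j.rev`, Bob's two measurements are relabelings of the single
projective measurement `{E₀, E₁}` along `b`. Take Bob's outcome `s` as the hidden variable, with
weight `p s = tr(ρ (1 ⊗ E_s))`, hidden state `E_s` (a rank-one projector of trace one), and
Alice's response `q i m s = tr(ρ (A_{i|m} ⊗ E_s)) / p s`. Orthogonality `E_s E_t = δ_{st} E_s`
collapses the model sum to `p t * q i m t = tr(ρ (A_{i|m} ⊗ E_t))`.
-/

open scoped MatrixOrder in
theorem Matrix.PosSemidef.trace_mul_nonneg {n 𝕜 : Type*} [Fintype n] [RCLike 𝕜]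
    {A B : Matrix n n 𝕜} (hA : A.PosSemidef) (hB : B.PosSemidef) : 0 ≤ (A * B).trace := by
  classical
  obtain ⟨C, rfl⟩ := CStarAlgebra.nonneg_iff_eq_star_mul_self.mp hB.nonneg
  rw [star_eq_conjTranspose, ← Matrix.mul_assoc, trace_mul_comm]
  simpa only [Matrix.mul_assoc] using (hA.mul_mul_conjTranspose_same C).trace_nonneg

theorem exists_prob_vector_sum_mul_eq {ι : Type*} [Fintype ι] [Nonempty ι] {t : ι → ℝ}
    (ht : ∀ i, 0 ≤ t i) :
    ∃ q : ι → ℝ, (∀ i, 0 ≤ q i ∧ q i ≤ 1) ∧ ∑ i, q i = 1 ∧ ∀ i, (∑ j, t j) * q i = t i := by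
  have ht_le : ∀ i, t i ≤ ∑ j, t j := fun i =>
    Finset.single_le_sum (fun j _ => ht j) (Finset.mem_univ i)
  rcases (Finset.sum_nonneg fun j _ => ht j).eq_or_lt with h0 | hpos
  · refine ⟨fun _ => (Fintype.card ι : ℝ)⁻¹, fun _ => ⟨by positivity, ?_⟩, ?_, fun i => ?_⟩
    · exact inv_le_one_of_one_le₀ (by exact_mod_cast Fintype.card_pos)
    · simp
    · rw [← h0, zero_mul]; linarith [ht_le i, ht i]
  · refine ⟨fun i => t i / ∑ j, t j, fun i => ⟨div_nonneg (ht i) hpos.le,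
      div_le_one_of_le₀ (ht_le i) hpos.le⟩, ?_, fun i => mul_div_cancel₀ _ hpos.ne'⟩
    rw [← Finset.sum_div, div_self hpos.ne']

theorem pauliVec_eq (v : EuclideanSpace ℝ (Fin 3)) :
    pauliVec v = !![(v 2 : ℂ), v 0 - v 1 * Complex.I; v 0 + v 1 * Complex.I, -v 2] := by
  ext i j
  fin_cases i <;> fin_cases j <;> simp [pauliVec, σ₁, σ₂, σ₃]; ring

theorem pauliVec_mul_self (v : EuclideanSpace ℝ (Fin 3)) :
    pauliVec v * pauliVec v = ((‖v‖ ^ 2 : ℝ) : ℂ) • 1 := by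
  rw [EuclideanSpace.real_norm_sq_eq, Fin.sum_univ_three, pauliVec_eq]
  ext i j
  fin_cases i <;> fin_cases j <;> simp [Matrix.mul_apply, Fin.sum_univ_two] <;> ring_nf <;>
    simp [Complex.I_sq]

theorem trace_pauliVec (v : EuclideanSpace ℝ (Fin 3)) : (pauliVec v).trace = 0 := by
  simp [pauliVec_eq, Matrix.trace_fin_two]

theorem isHermitian_pauliVec (v : EuclideanSpace ℝ (Fin 3)) : (pauliVec v).IsHermitian := by
  rw [pauliVec_eq]
  ext i j
  fin_cases i <;> fin_cases j <;> simp [Complex.ext_iff]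

theorem pauliVec_smul (c : ℝ) (v : EuclideanSpace ℝ (Fin 3)) :
    pauliVec (c • v) = (c : ℂ) • pauliVec v := by
  simp only [pauliVec, PiLp.smul_apply, smul_eq_mul, Complex.ofReal_mul, smul_add, smul_smul]

section effect

variable (v : EuclideanSpace ℝ (Fin 3))

theorem trace_effect (i : Fin 2) : (effect v i).trace = 1 := by
  simp [effect, trace_pauliVec]

theorem isHermitian_effect (i : Fin 2) : (effect v i).IsHermitian := by
  simp [effect, IsHermitian, (isHermitian_pauliVec v).eq]

theorem effect_zero_add_effect_one : effect v 0 + effect v 1 = 1 := by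
  simp only [effect, Fin.val_zero, Fin.val_one, pow_zero, pow_one, one_smul, neg_one_smul]
  module

theorem effect_neg (i : Fin 2) : effect (-v) i = effect v i.rev := by
  have hneg : pauliVec (-v) = -pauliVec v := by
    rw [← neg_one_smul ℝ v, pauliVec_smul]; simp
  fin_cases i <;> simp [effect, hneg]

theorem effect_smul_of_sign {ε : ℝ} (hε : ε = 1 ∨ ε = -1) (i : Fin 2) :
    ∃ s, effect (ε • v) i = effect v s := by
  rcases hε with rfl | rfl
  · exact ⟨i, by rw [one_smul]⟩
  · exact ⟨i.rev, by rw [neg_one_smul, effect_neg]⟩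

variable {v} (hv : ‖v‖ = 1)
include hv

theorem effect_mul_effect (i j : Fin 2) :
    effect v i * effect v j = if i = j then effect v i else 0 := by
  have hsq : pauliVec v * pauliVec v = 1 := by simp [pauliVec_mul_self, hv]
  fin_cases i <;> fin_cases j <;>
    simp only [effect, pow_zero, pow_one, one_smul, neg_one_smul, Matrix.smul_mul,
      Matrix.mul_smul, add_mul, mul_add, one_mul, mul_one, neg_mul, mul_neg, hsq, if_true] <;>
  · push_cast
    match_scalars <;> ring

theorem posSemidef_effect (i : Fin 2) : (effect v i).PosSemidef := by
  have h : effect v i = (effect v i)ᴴ * effect v i := by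
    rw [(isHermitian_effect v i).eq, effect_mul_effect hv, if_pos rfl]
  rw [h]
  exact posSemidef_conjTranspose_mul_self _

theorem sum_mul_re_trace_effect_mul_effect (f : Fin 2 → ℝ) (j : Fin 2) :
    ∑ i, f i * ((effect v i * effect v j).trace).re = f j := by
  simp [effect_mul_effect hv, apply_ite, trace_effect]

end effect

theorem sum_re_trace_mul_effect_kronecker (ρ : Matrix (Fin 2 × Fin 2) (Fin 2 × Fin 2) ℂ)
    (v : EuclideanSpace ℝ (Fin 3)) (B : Matrix (Fin 2) (Fin 2) ℂ) :
    ∑ i, ((ρ * (effect v i ⊗ₖ B)).trace).re = ((ρ * (1 ⊗ₖ B)).trace).re := by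
  rw [Fin.sum_univ_two, ← Complex.add_re, ← trace_add, ← mul_add, ← add_kronecker,
    effect_zero_add_effect_one]

theorem sum_re_trace_mul_one_kronecker_effect (ρ : Matrix (Fin 2 × Fin 2) (Fin 2 × Fin 2) ℂ)
    (v : EuclideanSpace ℝ (Fin 3)) :
    ∑ j, ((ρ * (1 ⊗ₖ effect v j)).trace).re = (ρ.trace).re := by
  rw [Fin.sum_univ_two, ← Complex.add_re, ← trace_add, ← mul_add, ← kronecker_add,
    effect_zero_add_effect_one, one_kronecker_one, mul_one]

/-- if Bob's two measurement vectors are `ε1 b` and `ε2 b` with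
`ε1, ε2 ∈ {1, −1}` (parallel or antiparallel), then the full statistics of any two-qubit
state `ρ` admits a finite LHV-LHS model. -/
theorem parallel_measurements_unsteerable (ρ : Matrix (Fin 2 × Fin 2) (Fin 2 × Fin 2) ℂ)
    (hρ : ρ.PosSemidef) (htr : ρ.trace = 1)
    (a : Fin 2 → EuclideanSpace ℝ (Fin 3)) (ha : ∀ m, ‖a m‖ = 1)
    (b : EuclideanSpace ℝ (Fin 3)) (hb : ‖b‖ = 1)
    (ε : Fin 2 → ℝ) (hε : ∀ n, ε n = 1 ∨ ε n = -1) :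
    ∃ (N : ℕ) (p : Fin N → ℝ) (q : Fin 2 → Fin 2 → Fin N → ℝ)
      (ρs : Fin N → Matrix (Fin 2) (Fin 2) ℂ),
      (∀ lam, 0 ≤ p lam) ∧ (∑ lam, p lam = 1) ∧
      (∀ i m lam, 0 ≤ q i m lam ∧ q i m lam ≤ 1) ∧
      (∀ m lam, q 0 m lam + q 1 m lam = 1) ∧
      (∀ lam, (ρs lam).PosSemidef ∧ (ρs lam).trace = 1) ∧
      (∀ i j m n, ((ρ * (effect (a m) i ⊗ₖ effect (ε n • b) j)).trace).re
        = ∑ lam, p lam * q i m lam * ((ρs lam * effect (ε n • b) j).trace).re) := by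
  set P : Fin 2 → Fin 2 → Fin 2 → ℝ :=
    fun i m s => ((ρ * (effect (a m) i ⊗ₖ effect b s)).trace).re
  set p : Fin 2 → ℝ := fun s => ((ρ * (1 ⊗ₖ effect b s)).trace).re
  have hP_nonneg : ∀ i m s, 0 ≤ P i m s := fun i m s => (Complex.nonneg_iff.mp
    (hρ.trace_mul_nonneg ((posSemidef_effect (ha m) i).kronecker (posSemidef_effect hb s)))).1
  have hP_sum : ∀ m s, ∑ i, P i m s = p s := fun m s =>
    sum_re_trace_mul_effect_kronecker ρ (a m) (effect b s)
  have hp_nonneg : ∀ s, 0 ≤ p s := fun s =>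
    hP_sum 0 s ▸ Finset.sum_nonneg fun i _ => hP_nonneg i 0 s
  have hp_sum : ∑ s, p s = 1 :=
    (sum_re_trace_mul_one_kronecker_effect ρ b).trans (by rw [htr, Complex.one_re])
  choose q hq using fun m s => exists_prob_vector_sum_mul_eq (hP_nonneg · m s)
  refine ⟨2, p, fun i m s => q m s i, effect b, hp_nonneg, hp_sum, fun i m s => (hq m s).1 i,
    fun m s => by simpa only [Fin.sum_univ_two] using (hq m s).2.1,
    fun s => ⟨posSemidef_effect hb s, trace_effect b s⟩, fun i j m n => ?_⟩
  obtain ⟨s, hs⟩ := effect_smul_of_sign b (hε n) j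
  rw [hs, sum_mul_re_trace_effect_mul_effect hb (fun s => p s * q m s i), ← hP_sum m s]
  exact ((hq m s).2.2 i).symm

end
end
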